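/- arXiv:2602.18310 — 2 statements merged into one kernel-verified Lean document; each statement's English description precedes it below -/
import Mathlib

section
/- Two maximal rectangle configurations separated by one empty row can be glued into a maximal configuration: let n, m ≥ 1, let T₁ be a maximal configuration on R₁ := {1,…,n} × {1,…,m} and let T₂ be a maximal configuration on R₂ := {1,…,n} × {m+2,…,2m+1} (i.e., T₂ − (0, m+1) is a maximal configuration on Λ_{n,m}). Then there exists a maximal (hence compatible) configuration U on Λ_{n,2m+1} := {1,…,n} × {1,…,2m+1} such that U ∩ R₁ = T₁ and U ∩ R₂ = T₂. -/
/-- Adjacency in the triangular lattice, modeled on `ℤ × ℤ`. -/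
def TriAdj (u v : ℤ × ℤ) : Prop :=
  (u.1 - v.1, u.2 - v.2) ∈
    ({(1, 0), (-1, 0), (0, 1), (0, -1), (1, -1), (-1, 1)} : Finset (ℤ × ℤ))

/-- A set of sites is independent if no two of its elements are adjacent. -/
def IsIndependent (S : Set (ℤ × ℤ)) : Prop :=
  ∀ u ∈ S, ∀ v ∈ S, ¬ TriAdj u v

/-- Maximal independent set of the triangular lattice. -/
def IsMIS (S : Set (ℤ × ℤ)) : Prop :=
  IsIndependent S ∧ ∀ u ∉ S, ∃ v ∈ S, TriAdj u v

/-- The box `{a,…,b} × {c,…,d} ⊆ ℤ²`. -/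
def Box (a b c d : ℤ) : Set (ℤ × ℤ) :=
  {p | a ≤ p.1 ∧ p.1 ≤ b ∧ c ≤ p.2 ∧ p.2 ≤ d}

/-- The rectangle `Λ_{n,m} = {1,…,n} × {1,…,m}`. -/
def Rect (n m : ℤ) : Set (ℤ × ℤ) := Box 1 n 1 m

/-- `T` is a maximal configuration on the region `Λ`: `T ⊆ Λ`, `T` is
independent, and every site of `Λ \ T` has a neighbor in `T`. -/
def IsMaxConfig (Λ T : Set (ℤ × ℤ)) : Prop :=
  T ⊆ Λ ∧ IsIndependent T ∧ ∀ u ∈ Λ \ T, ∃ v ∈ T, TriAdj u v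

/-- `T` is a compatible configuration on the region `Λ`: it is the restriction
to `Λ` of some maximal independent set of the whole lattice. -/
def IsCompatConfig (Λ T : Set (ℤ × ℤ)) : Prop :=
  ∃ S : Set (ℤ × ℤ), IsMIS S ∧ S ∩ Λ = T

/-!
Row `m` and row `m + 2` are never adjacent, so `T₁ ∪ T₂` is independent; extend it (Zorn) to a
maximal configuration `U` on the whole box. An extra site of `U` inside `R₁` would have a
neighbour in `T₁ ⊆ U`, by maximality of `T₁`, contradicting the independence of `U`; so `U`
restricts to `T₁` on `R₁`, and likewise to `T₂` on `R₂`.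
-/

lemma triAdj_iff (u v : ℤ × ℤ) : TriAdj u v ↔
    (u.1 - v.1 = 1 ∧ u.2 - v.2 = 0) ∨ (u.1 - v.1 = -1 ∧ u.2 - v.2 = 0) ∨
    (u.1 - v.1 = 0 ∧ u.2 - v.2 = 1) ∨ (u.1 - v.1 = 0 ∧ u.2 - v.2 = -1) ∨
    (u.1 - v.1 = 1 ∧ u.2 - v.2 = -1) ∨ (u.1 - v.1 = -1 ∧ u.2 - v.2 = 1) := by
  simp [TriAdj, Prod.ext_iff]

lemma not_triAdj_self (u : ℤ × ℤ) : ¬ TriAdj u u := by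
  rw [triAdj_iff]; omega

lemma triAdj_comm (u v : ℤ × ℤ) : TriAdj u v ↔ TriAdj v u := by
  simp only [triAdj_iff]; omega

lemma not_triAdj_of_snd_add_two_le {u v : ℤ × ℤ} (h : u.2 + 2 ≤ v.2) : ¬ TriAdj u v := by
  rw [triAdj_iff]; omega

lemma IsIndependent.union {A B : Set (ℤ × ℤ)} (hA : IsIndependent A) (hB : IsIndependent B)
    (hAB : ∀ u ∈ A, ∀ v ∈ B, ¬ TriAdj u v) : IsIndependent (A ∪ B) := by
  rintro u (hu | hu) v (hv | hv)
  · exact hA u hu v hv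
  · exact hAB u hu v hv
  · rw [triAdj_comm]; exact hAB v hv u hu
  · exact hB u hu v hv

lemma isIndependent_sUnion_of_isChain {c : Set (Set (ℤ × ℤ))} (hc : IsChain (· ⊆ ·) c)
    (hind : ∀ S ∈ c, IsIndependent S) : IsIndependent (⋃₀ c) := by
  rintro u ⟨S, hS, hu⟩ v ⟨S', hS', hv⟩
  obtain ⟨S'', hS'', hSS'', hS'S''⟩ := hc.directedOn S hS S' hS'
  exact hind S'' hS'' u (hSS'' hu) v (hS'S'' hv)

lemma exists_isMaxConfig_superset {Λ T : Set (ℤ × ℤ)} (hTΛ : T ⊆ Λ) (hT : IsIndependent T) :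
    ∃ U, T ⊆ U ∧ IsMaxConfig Λ U := by
  obtain ⟨U, hTU, ⟨hUΛ, hU⟩, hUmax⟩ :=
    zorn_subset_nonempty {S | S ⊆ Λ ∧ IsIndependent S}
      (fun c hcS hc _ => ⟨⋃₀ c,
        ⟨Set.sUnion_subset fun S hS => (hcS hS).1,
          isIndependent_sUnion_of_isChain hc fun S hS => (hcS hS).2⟩,
        fun _ => Set.subset_sUnion_of_mem⟩) T ⟨hTΛ, hT⟩
  refine ⟨U, hTU, hUΛ, hU, fun u ⟨huΛ, huU⟩ => ?_⟩
  by_contra! hfree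
  have hins : IsIndependent (insert u U) := by
    refine IsIndependent.union (fun _ hx _ hy => ?_) hU fun _ hx v hv => ?_
    · rw [hx, hy]; exact not_triAdj_self u
    · rw [hx]; exact hfree v hv
  exact huU (hUmax ⟨Set.insert_subset huΛ hUΛ, hins⟩ (Set.subset_insert u U) (Set.mem_insert u U))

lemma IsMaxConfig.inter_eq_of_subset {Λ T U : Set (ℤ × ℤ)} (hT : IsMaxConfig Λ T)
    (hU : IsIndependent U) (hTU : T ⊆ U) : U ∩ Λ = T := by
  refine subset_antisymm (fun u ⟨huU, huΛ⟩ => ?_) (Set.subset_inter hTU hT.1)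
  by_contra huT
  obtain ⟨v, hvT, huv⟩ := hT.2.2 u ⟨huΛ, huT⟩
  exact hU u huU v (hTU hvT) huv

theorem glue_maxConfigs_general (n m : ℤ)
    (T₁ T₂ : Set (ℤ × ℤ))
    (hT₁ : IsMaxConfig (Box 1 n 1 m) T₁)
    (hT₂ : IsMaxConfig (Box 1 n (m + 2) (2 * m + 1)) T₂) :
    ∃ U : Set (ℤ × ℤ), IsMaxConfig (Box 1 n 1 (2 * m + 1)) U ∧
      U ∩ Box 1 n 1 m = T₁ ∧ U ∩ Box 1 n (m + 2) (2 * m + 1) = T₂ := by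
  have hsub : T₁ ∪ T₂ ⊆ Box 1 n 1 (2 * m + 1) := by
    rintro p (hp | hp)
    · obtain ⟨h₁, h₂, h₃, h₄⟩ := hT₁.1 hp; exact ⟨h₁, h₂, h₃, by omega⟩
    · obtain ⟨h₁, h₂, h₃, h₄⟩ := hT₂.1 hp; exact ⟨h₁, h₂, by omega, h₄⟩
  have hind : IsIndependent (T₁ ∪ T₂) :=
    hT₁.2.1.union hT₂.2.1 fun u hu v hv =>
      not_triAdj_of_snd_add_two_le (by linarith [(hT₁.1 hu).2.2.2, (hT₂.1 hv).2.2.1])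
  obtain ⟨U, hTU, hU⟩ := exists_isMaxConfig_superset hsub hind
  exact ⟨U, hU, hT₁.inter_eq_of_subset hU.2.1 (Set.subset_union_left.trans hTU),
    hT₂.inter_eq_of_subset hU.2.1 (Set.subset_union_right.trans hTU)⟩

/-- Two maximal rectangle configurations separated by one empty row can be
glued into a maximal configuration on the larger rectangle. -/
theorem glue_maxConfigs (n m : ℤ) (hn : 1 ≤ n) (hm : 1 ≤ m)
    (T₁ T₂ : Set (ℤ × ℤ))
    (hT₁ : IsMaxConfig (Box 1 n 1 m) T₁)
    (hT₂ : IsMaxConfig (Box 1 n (m + 2) (2 * m + 1)) T₂) :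
    ∃ U : Set (ℤ × ℤ), IsMaxConfig (Box 1 n 1 (2 * m + 1)) U ∧
      U ∩ Box 1 n 1 m = T₁ ∧ U ∩ Box 1 n (m + 2) (2 * m + 1) = T₂ :=
  glue_maxConfigs_general n m T₁ T₂ hT₁ hT₂
end

section
/- All Delaunay triangles of a sparse periodic ground state are regular: let S be a coset t + Λ₁ or t + Λ₂ (t ∈ ℤ²), and let u, v, w ∈ S be distinct sites whose embedded images f(u), f(v), f(w) are not collinear, such that there exist c ∈ ℝ² and r > 0 with ‖f(u) − c‖ = ‖f(v) − c‖ = ‖f(w) − c‖ = r and ‖f(s) − c‖ ≥ r for every s ∈ S. Then the triangle f(u)f(v)f(w) is equilateral with side length √7. -/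
/-- Embedding of the triangular lattice into the Euclidean plane (identified
with `ℂ`): `f(i,j) = i·(1,0) + j·(1/2, √3/2)`. -/
noncomputable def emb (p : ℤ × ℤ) : ℂ :=
  ⟨(p.1 : ℝ) + (p.2 : ℝ) / 2, (p.2 : ℝ) * Real.sqrt 3 / 2⟩

/-- The index-7 sublattice `Λ₁ = {(a,b) : a + 3b ≡ 0 (mod 7)}`. -/
def Lam1 : Set (ℤ × ℤ) := {p | ((p.1 + 3 * p.2 : ℤ) : ZMod 7) = 0}

/-- The index-7 sublattice `Λ₂ = {(a,b) : a + 5b ≡ 0 (mod 7)}`. -/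
def Lam2 : Set (ℤ × ℤ) := {p | ((p.1 + 5 * p.2 : ℤ) : ZMod 7) = 0}

/-- The coset `t + Λ`. -/
def Coset (t : ℤ × ℤ) (Λ : Set (ℤ × ℤ)) : Set (ℤ × ℤ) :=
  {p | (p.1 - t.1, p.2 - t.2) ∈ Λ}
/-!
Under `emb`, `ℤ × ℤ` becomes the ring of Eisenstein integers `ℤ[ζ]`, `ζ = e^{iπ/3}`, and `Λ₁`, `Λ₂`
become the principal ideals generated by `1 + 2ζ` and `2 + ζ`, both of norm `7`. Since nonzero
Eisenstein integers have norm at least `1` and every point of the plane lies within `1/√3` of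
`ℤ[ζ]`, the points of a coset `S` are pairwise at distance at least `√7`, while every point of
the plane lies within `√(7/3)` of `S`. The circumdisk of a Delaunay triangle contains no point of
`S` in its interior, so its circumradius `r` satisfies `3r² ≤ 7`. For three points on a circle of
radius `r` the squared side lengths add up to at most `9r² ≤ 21`; as each is at least `7`, each is
exactly `7`.
-/

section InnerProductSpace

variable {E : Type*} [NormedAddCommGroup E] [InnerProductSpace ℝ E]

lemma sum_sq_norm_sub_add_sq_norm_add (x y z : E) :
    ‖x - y‖ ^ 2 + ‖y - z‖ ^ 2 + ‖x - z‖ ^ 2 + ‖x + y + z‖ ^ 2 =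
      3 * (‖x‖ ^ 2 + ‖y‖ ^ 2 + ‖z‖ ^ 2) := by
  simp only [norm_sub_sq_real, norm_add_sq_real, inner_add_left]
  ring

theorem sq_norm_sub_eq_of_inscribed {a b c o : E} {r m : ℝ}
    (ha : ‖a - o‖ = r) (hb : ‖b - o‖ = r) (hc : ‖c - o‖ = r) (hr : 3 * r ^ 2 ≤ m)
    (hab : m ≤ ‖a - b‖ ^ 2) (hbc : m ≤ ‖b - c‖ ^ 2) (hac : m ≤ ‖a - c‖ ^ 2) :
    ‖a - b‖ ^ 2 = m ∧ ‖b - c‖ ^ 2 = m ∧ ‖a - c‖ ^ 2 = m := by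
  have h := sum_sq_norm_sub_add_sq_norm_add (a - o) (b - o) (c - o)
  simp only [sub_sub_sub_cancel_right, ha, hb, hc] at h
  have := sq_nonneg ‖a - o + (b - o) + (c - o)‖
  refine ⟨?_, ?_, ?_⟩ <;> linarith

end InnerProductSpace

/-- The norm form of `ℤ[ζ]` in the basis `1, ζ`. -/
def eisForm (x y : ℝ) : ℝ := x ^ 2 + x * y + y ^ 2

/-- The barycentric average of the three values is `1/3 - eisForm (x - 1/3) (y - 1/3) ≤ 1/3`. -/
lemma eisForm_le_of_mem_triangle {x y : ℝ} (hx : 0 ≤ x) (hy : 0 ≤ y) (hxy : x + y ≤ 1) :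
    eisForm x y ≤ 1 / 3 ∨ eisForm (x - 1) y ≤ 1 / 3 ∨ eisForm x (y - 1) ≤ 1 / 3 := by
  have h : (1 - x - y) * eisForm x y + x * eisForm (x - 1) y + y * eisForm x (y - 1) =
      1 / 3 - eisForm (x - 1 / 3) (y - 1 / 3) := by
    unfold eisForm; ring
  have hnn : 0 ≤ eisForm (x - 1 / 3) (y - 1 / 3) := by
    unfold eisForm; nlinarith [sq_nonneg (x - y), sq_nonneg (x + y - 2 / 3)]
  by_contra! hc
  obtain ⟨h0, h1, h2⟩ := hc
  set m := min (min (eisForm x y) (eisForm (x - 1) y)) (eisForm x (y - 1))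
  have hm0 : m ≤ eisForm x y := (min_le_left _ _).trans (min_le_left _ _)
  have hm1 : m ≤ eisForm (x - 1) y := (min_le_left _ _).trans (min_le_right _ _)
  have hm2 : m ≤ eisForm x (y - 1) := min_le_right _ _
  have hm : 1 / 3 < m := lt_min (lt_min h0 h1) h2
  nlinarith [mul_le_mul_of_nonneg_left hm0 (by linarith : 0 ≤ 1 - x - y),
    mul_le_mul_of_nonneg_left hm1 hx, mul_le_mul_of_nonneg_left hm2 hy]

lemma exists_eisForm_sub_le (α β : ℝ) : ∃ m n : ℤ, eisForm (α - m) (β - n) ≤ 1 / 3 := by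
  have hx := Int.fract_nonneg α
  have hy := Int.fract_nonneg β
  have hx1 := Int.fract_lt_one α
  have hy1 := Int.fract_lt_one β
  have hα : α = ⌊α⌋ + Int.fract α := (Int.floor_add_fract α).symm
  have hβ : β = ⌊β⌋ + Int.fract β := (Int.floor_add_fract β).symm
  rcases le_total (Int.fract α + Int.fract β) 1 with h | h
  · rcases eisForm_le_of_mem_triangle hx hy h with h' | h' | h'
    · exact ⟨⌊α⌋, ⌊β⌋, by convert h' using 2 <;> linarith⟩
    · exact ⟨⌊α⌋ + 1, ⌊β⌋, by convert h' using 2 <;> push_cast <;> linarith⟩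
    · exact ⟨⌊α⌋, ⌊β⌋ + 1, by convert h' using 2 <;> push_cast <;> linarith⟩
  · -- the point reflection `(x, y) ↦ (1 - x, 1 - y)` maps the upper half of the unit square
    -- onto the lower one and preserves `eisForm`-distances
    have hneg (x y : ℝ) : eisForm (-x) (-y) = eisForm x y := by unfold eisForm; ring
    rcases eisForm_le_of_mem_triangle (x := 1 - Int.fract α) (y := 1 - Int.fract β)
      (by linarith) (by linarith) (by linarith) with h' | h' | h'
    · exact ⟨⌊α⌋ + 1, ⌊β⌋ + 1, by rw [← hneg]; convert h' using 2 <;> push_cast <;> linarith⟩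
    · exact ⟨⌊α⌋, ⌊β⌋ + 1, by rw [← hneg]; convert h' using 2 <;> push_cast <;> linarith⟩
    · exact ⟨⌊α⌋ + 1, ⌊β⌋, by rw [← hneg]; convert h' using 2 <;> push_cast <;> linarith⟩

/-- `ζ = e^{iπ/3}`, so that `emb p = p.1 + p.2 ζ`. -/
noncomputable def zeta6 : ℂ := ⟨1 / 2, Real.sqrt 3 / 2⟩

lemma zeta6_sq : zeta6 ^ 2 = zeta6 - 1 := by
  have h3 := Real.sq_sqrt (show (0 : ℝ) ≤ 3 by norm_num)
  apply Complex.ext <;>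
    simp only [zeta6, sq, Complex.mul_re, Complex.mul_im, Complex.sub_re, Complex.sub_im,
      Complex.one_re, Complex.one_im] <;> nlinarith

lemma emb_eq (p : ℤ × ℤ) : emb p = p.1 + p.2 * zeta6 := by
  apply Complex.ext <;>
    simp only [emb, zeta6, Complex.add_re, Complex.add_im, Complex.mul_re, Complex.mul_im,
      Complex.intCast_re, Complex.intCast_im] <;> ring

lemma sq_norm_add_mul_zeta6 (x y : ℝ) : ‖(x + y * zeta6 : ℂ)‖ ^ 2 = eisForm x y := by
  have h3 := Real.sq_sqrt (show (0 : ℝ) ≤ 3 by norm_num)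
  simp only [Complex.sq_norm, Complex.normSq_apply, zeta6, eisForm, Complex.add_re,
    Complex.add_im, Complex.mul_re, Complex.mul_im, Complex.ofReal_re, Complex.ofReal_im]
  linear_combination (y ^ 2 / 4) * h3

lemma exists_eq_add_mul_zeta6 (z : ℂ) : ∃ x y : ℝ, z = x + y * zeta6 := by
  have h3 : Real.sqrt 3 ≠ 0 := by positivity
  refine ⟨z.re - z.im / Real.sqrt 3, 2 * z.im / Real.sqrt 3, Complex.ext ?_ ?_⟩ <;>
    simp only [zeta6, Complex.add_re, Complex.add_im, Complex.mul_re, Complex.mul_im,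
      Complex.ofReal_re, Complex.ofReal_im] <;> field_simp <;> ring

lemma emb_add (p q : ℤ × ℤ) : emb (p + q) = emb p + emb q := by
  simp only [emb_eq, Prod.fst_add, Prod.snd_add]; push_cast; ring

lemma emb_sub (p q : ℤ × ℤ) : emb (p - q) = emb p - emb q := by
  simp only [emb_eq, Prod.fst_sub, Prod.snd_sub]; push_cast; ring

lemma sq_norm_emb (p : ℤ × ℤ) : ‖emb p‖ ^ 2 = eisForm p.1 p.2 := by
  rw [emb_eq, ← sq_norm_add_mul_zeta6]; push_cast; rfl

lemma one_le_sq_norm_emb {p : ℤ × ℤ} (hp : p ≠ 0) : 1 ≤ ‖emb p‖ ^ 2 := by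
  have hpos : 0 < p.1 ^ 2 + p.1 * p.2 + p.2 ^ 2 := by
    have : p.1 ≠ 0 ∨ p.2 ≠ 0 := by
      by_contra! h; exact hp (Prod.ext h.1 h.2)
    rcases this with h | h
    · nlinarith [sq_nonneg (p.1 + 2 * p.2), sq_pos_of_ne_zero h]
    · nlinarith [sq_nonneg (2 * p.1 + p.2), sq_pos_of_ne_zero h]
  rw [sq_norm_emb, eisForm]
  exact_mod_cast hpos

lemma exists_sq_norm_sub_emb_le (z : ℂ) : ∃ q : ℤ × ℤ, ‖z - emb q‖ ^ 2 ≤ 1 / 3 := by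
  obtain ⟨x, y, rfl⟩ := exists_eq_add_mul_zeta6 z
  obtain ⟨m, n, h⟩ := exists_eisForm_sub_le x y
  refine ⟨(m, n), ?_⟩
  rw [emb_eq, ← sq_norm_add_mul_zeta6] at *
  convert h using 3
  push_cast
  ring

/-- Multiplication of `ℤ[ζ]` in the basis `1, ζ`, using `ζ² = ζ - 1`. -/
def eisMul (a b : ℤ × ℤ) : ℤ × ℤ := (a.1 * b.1 - a.2 * b.2, a.1 * b.2 + a.2 * b.1 + a.2 * b.2)

lemma emb_eisMul (a b : ℤ × ℤ) : emb (eisMul a b) = emb a * emb b := by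
  simp only [emb_eq, eisMul]
  push_cast
  linear_combination (-(a.2 * b.2 : ℂ)) * zeta6_sq

lemma Lam1_eq_range : Lam1 = Set.range (eisMul (1, 2)) := by
  ext ⟨a, b⟩
  simp only [Lam1, Set.mem_ofPred_eq, ZMod.intCast_zmod_eq_zero_iff_dvd, Set.mem_range, eisMul,
    Prod.ext_iff]
  constructor
  · rintro ⟨k, hk⟩
    exact ⟨(3 * k - b, b - 2 * k), by push_cast at hk ⊢; constructor <;> linarith⟩
  · rintro ⟨q, rfl, rfl⟩
    exact ⟨q.1 + q.2, by push_cast; ring⟩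

lemma Lam2_eq_range : Lam2 = Set.range (eisMul (2, 1)) := by
  ext ⟨a, b⟩
  simp only [Lam2, Set.mem_ofPred_eq, ZMod.intCast_zmod_eq_zero_iff_dvd, Set.mem_range, eisMul,
    Prod.ext_iff]
  constructor
  · rintro ⟨k, hk⟩
    exact ⟨(3 * k - 2 * b, b - k), by push_cast at hk ⊢; constructor <;> linarith⟩
  · rintro ⟨q, rfl, rfl⟩
    exact ⟨q.1 + 2 * q.2, by push_cast; ring⟩

lemma mem_coset_iff {t p : ℤ × ℤ} {Λ : Set (ℤ × ℤ)} : p ∈ Coset t Λ ↔ p - t ∈ Λ := Iff.rfl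

lemma sq_norm_emb_le_sq_norm_emb_sub {ω t p q : ℤ × ℤ}
    (hp : p ∈ Coset t (Set.range (eisMul ω))) (hq : q ∈ Coset t (Set.range (eisMul ω)))
    (hpq : p ≠ q) : ‖emb ω‖ ^ 2 ≤ ‖emb p - emb q‖ ^ 2 := by
  obtain ⟨a, ha⟩ := mem_coset_iff.1 hp
  obtain ⟨b, hb⟩ := mem_coset_iff.1 hq
  have hab : a - b ≠ 0 :=
    sub_ne_zero.2 fun h ↦ hpq (sub_left_injective (ha.symm.trans (h ▸ hb)))
  have hdiff : emb p - emb q = emb ω * emb (a - b) := by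
    rw [emb_sub, mul_sub, ← emb_eisMul, ← emb_eisMul, ha, hb, emb_sub, emb_sub]
    ring
  rw [hdiff, norm_mul, mul_pow]
  nlinarith [one_le_sq_norm_emb hab, sq_nonneg ‖emb ω‖]

lemma exists_mem_coset_sq_norm_sub_le (t : ℤ × ℤ) {ω : ℤ × ℤ} (hω : ω ≠ 0) (c : ℂ) :
    ∃ s ∈ Coset t (Set.range (eisMul ω)), ‖emb s - c‖ ^ 2 ≤ ‖emb ω‖ ^ 2 / 3 := by
  have hω' : emb ω ≠ 0 := by
    intro h
    have := one_le_sq_norm_emb hω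
    norm_num [h] at this
  obtain ⟨q, hq⟩ := exists_sq_norm_sub_emb_le ((c - emb t) / emb ω)
  refine ⟨t + eisMul ω q, mem_coset_iff.2 ⟨q, (add_sub_cancel_left t _).symm⟩, ?_⟩
  have hdiff : emb (t + eisMul ω q) - c = -(emb ω * ((c - emb t) / emb ω - emb q)) := by
    rw [emb_add, emb_eisMul, mul_sub, mul_div_cancel₀ _ hω']
    ring
  rw [hdiff, norm_neg, norm_mul, mul_pow]
  nlinarith [mul_le_mul_of_nonneg_left hq (sq_nonneg ‖emb ω‖)]

theorem sparse_PGS_delaunay_regular_general (t : ℤ × ℤ) (S : Set (ℤ × ℤ))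
    (hS : S = Coset t Lam1 ∨ S = Coset t Lam2)
    (u v w : ℤ × ℤ) (hu : u ∈ S) (hv : v ∈ S) (hw : w ∈ S)
    (huv : u ≠ v) (hvw : v ≠ w) (huw : u ≠ w)
    (c : ℂ) (r : ℝ)
    (hcu : ‖emb u - c‖ = r) (hcv : ‖emb v - c‖ = r) (hcw : ‖emb w - c‖ = r)
    (hdelaunay : ∀ s ∈ S, r ≤ ‖emb s - c‖) :
    ‖emb u - emb v‖ = Real.sqrt 7 ∧ ‖emb v - emb w‖ = Real.sqrt 7 ∧
      ‖emb u - emb w‖ = Real.sqrt 7 := by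
  obtain ⟨ω, hω, rfl⟩ : ∃ ω, ‖emb ω‖ ^ 2 = 7 ∧ S = Coset t (Set.range (eisMul ω)) := by
    rcases hS with rfl | rfl
    · exact ⟨(1, 2), by norm_num [sq_norm_emb, eisForm], by rw [Lam1_eq_range]⟩
    · exact ⟨(2, 1), by norm_num [sq_norm_emb, eisForm], by rw [Lam2_eq_range]⟩
  have hω0 : ω ≠ 0 := by
    rintro rfl
    norm_num [sq_norm_emb, eisForm] at hω
  obtain ⟨s, hs, hsc⟩ := exists_mem_coset_sq_norm_sub_le t hω0 c
  have hr : 3 * r ^ 2 ≤ 7 := by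
    have hr0 : 0 ≤ r := hcu ▸ norm_nonneg _
    nlinarith [hdelaunay s hs]
  have hsep {p q} (hp : p ∈ Coset t (Set.range (eisMul ω)))
      (hq : q ∈ Coset t (Set.range (eisMul ω))) (hpq : p ≠ q) : 7 ≤ ‖emb p - emb q‖ ^ 2 :=
    hω ▸ sq_norm_emb_le_sq_norm_emb_sub hp hq hpq
  obtain ⟨huv', hvw', huw'⟩ :=
    sq_norm_sub_eq_of_inscribed hcu hcv hcw hr (hsep hu hv huv) (hsep hv hw hvw) (hsep hu hw huw)
  refine ⟨?_, ?_, ?_⟩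
  · rw [← huv', Real.sqrt_sq (norm_nonneg _)]
  · rw [← hvw', Real.sqrt_sq (norm_nonneg _)]
  · rw [← huw', Real.sqrt_sq (norm_nonneg _)]

/-- All Delaunay triangles of a sparse periodic ground state (a coset of `Λ₁`
or `Λ₂`) are regular: equilateral of side length `√7`. -/
theorem sparse_PGS_delaunay_regular (t : ℤ × ℤ) (S : Set (ℤ × ℤ))
    (hS : S = Coset t Lam1 ∨ S = Coset t Lam2)
    (u v w : ℤ × ℤ) (hu : u ∈ S) (hv : v ∈ S) (hw : w ∈ S)
    (huv : u ≠ v) (hvw : v ≠ w) (huw : u ≠ w)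
    (hncol : ¬ Collinear ℝ ({emb u, emb v, emb w} : Set ℂ))
    (c : ℂ) (r : ℝ) (hr : 0 < r)
    (hcu : ‖emb u - c‖ = r) (hcv : ‖emb v - c‖ = r) (hcw : ‖emb w - c‖ = r)
    (hdelaunay : ∀ s ∈ S, r ≤ ‖emb s - c‖) :
    ‖emb u - emb v‖ = Real.sqrt 7 ∧ ‖emb v - emb w‖ = Real.sqrt 7 ∧
      ‖emb u - emb w‖ = Real.sqrt 7 :=
  sparse_PGS_delaunay_regular_general t S hS u v w hu hv hw huv hvw huw c r hcu hcv hcw hdelaunay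
end
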